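/- arXiv:2202.00444 — 9 statements merged into one kernel-verified Lean document; each statement's English description precedes it below -/
import Mathlib

section
/- If F has nonempty images and X is a non-reducible set of F (no proper nonempty subset of X is critical), then F satisfies the Hall condition, i.e., ♯F(W) ≥ ♯W for all W ⊆ X. -/
open Finset
open scoped Classical

variable {α β : Type*}

section Defs
variable [DecidableEq α] [DecidableEq β]

/-- Image of a set under a set-valued mapping. -/
def im (F : α → Finset β) (W : Finset α) : Finset β := W.biUnion F

/-- Complement mapping `F_W : x ↦ F(x) \\ F(W)`. -/
def cmap (F : α → Finset β) (W : Finset α) : α → Finset β := fun x => F x \ im F W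

/-- Hall condition of a set-valued mapping on a domain `D`. -/
def HallOn (F : α → Finset β) (D : Finset α) : Prop := ∀ W ⊆ D, W.card ≤ (im F W).card

/-- A critical set: nonempty with `♯F(W) = ♯W`. -/
def Critical (F : α → Finset β) (W : Finset α) : Prop := W.Nonempty ∧ (im F W).card = W.card

/-- A non-reducible set: nonempty with no proper critical subset. -/
def NonReducible (F : α → Finset β) (W : Finset α) : Prop :=
  W.Nonempty ∧ ∀ V, V ⊂ W → ¬ Critical F V

/-- Union of the first `i` parts: `⋃_{j<i} W_j`. -/
def pre {m : ℕ} (W : Fin m → Finset α) (i : Fin m) : Finset α :=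
  (Finset.univ.filter (fun j => j.val < i.val)).biUnion W

/-- Hall partition of `F` on the whole domain. -/
def IsHallPartition [Fintype α] (F : α → Finset β) {m : ℕ} (W : Fin m → Finset α) : Prop :=
  (∀ i j, i ≠ j → Disjoint (W i) (W j)) ∧
  (Finset.univ.biUnion W = Finset.univ) ∧
  (∀ i, ∀ x ∈ W i, (cmap F (pre W i) x).Nonempty) ∧
  (∀ i, NonReducible (cmap F (pre W i)) (W i)) ∧
  (∀ i : Fin m, i.val < m - 1 → Critical (cmap F (pre W i)) (W i))

/-- The alldifferent kernel `F^*`. -/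
noncomputable def kernel [Fintype α] (F : α → Finset β) : α → Finset β :=
  fun x => (F x).filter (fun y => ∃ s : α → β, Function.Injective s ∧ (∀ z, s z ∈ F z) ∧ s x = y)

end Defs

theorem stmt2 [Fintype α] [Nonempty α] [DecidableEq α] [Fintype β] [Nonempty β] [DecidableEq β]
    (F : α → Finset β) (hne : ∀ x, (F x).Nonempty) (hnr : NonReducible F Finset.univ) :
    HallOn F Finset.univ := by
  by_contra h
  unfold HallOn at h
  push_neg at h
  obtain ⟨W, -, hW⟩ := h
  obtain ⟨V, hVmem, hVmin⟩ := Finset.exists_min_image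
    (Finset.univ.powerset.filter fun V => (im F V).card < V.card) Finset.card
    ⟨W, by simp [hW]⟩
  simp only [Finset.mem_filter, Finset.mem_powerset] at hVmem
  obtain ⟨-, hVlt⟩ := hVmem
  have hVne : V.Nonempty := by
    rw [Finset.nonempty_iff_ne_empty]
    rintro rfl
    simp [im] at hVlt
  obtain ⟨x, hx⟩ := hVne
  set V' := V.erase x with hV'
  have hsub : V' ⊂ V := Finset.erase_ssubset hx
  have hcard' : V'.card = V.card - 1 := Finset.card_erase_of_mem hx
  have hHall' : V'.card ≤ (im F V').card := by
    by_contra hc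
    push_neg at hc
    have := hVmin V' (by simp only [Finset.mem_filter, Finset.mem_powerset]; exact ⟨Finset.subset_univ _, hc⟩)
    exact absurd this (not_le.mpr (Finset.card_lt_card hsub))
  have himsub : im F V' ⊆ im F V := Finset.biUnion_subset_biUnion_of_subset_left _ hsub.subset
  have hle : (im F V').card ≤ (im F V).card := Finset.card_le_card himsub
  have heq : (im F V').card = V'.card := by omega
  rcases V'.eq_empty_or_nonempty with he | hVne'
  · have hVsing : V = {x} := by
      rw [hV'] at he
      have := Finset.eq_of_subset_of_card_le (Finset.singleton_subset_iff.mpr hx) ?_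
      · exact this.symm
      · have : V.card ≤ 1 := by
          have := Finset.card_erase_of_mem hx
          rw [he] at this
          simp at this
          omega
        simpa using this
    rw [hVsing] at hVlt
    simp [im] at hVlt
    exact absurd hVlt (Finset.nonempty_iff_ne_empty.mp (hne x))
  · have hcrit : Critical F V' := ⟨hVne', heq⟩
    have hss : V' ⊂ Finset.univ := by
      rw [Finset.ssubset_univ_iff]
      intro hu
      have : x ∈ V' := hu ▸ Finset.mem_univ x
      exact Finset.notMem_erase x V this
    exact hnr.2 V' hss hcrit
end

section
/- If (W_1, …, W_m) is a Hall partition of F, then for each i with 2 ≤ i ≤ m, the union ⋃_{j=1}^{i-1} W_j is a critical set of F. -/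
open Finset
open scoped Classical

variable {α β : Type*}

theorem stmt5 [Fintype α] [Nonempty α] [DecidableEq α] [Fintype β] [Nonempty β] [DecidableEq β]
    (F : α → Finset β) {m : ℕ} (W : Fin m → Finset α) (hHP : IsHallPartition F W) :
    ∀ i : Fin m, 1 ≤ i.val → Critical F (pre W i) := by
  -- disjoint union lemma on images
  have him : ∀ (A B : Finset α),
      (im F (A ∪ B)).card = (im F A).card + (im (cmap F A) B).card := by
    intro A B
    have h1 : im F (A ∪ B) = im F A ∪ im (cmap F A) B := by
      ext y
      simp only [im, cmap, mem_biUnion, mem_union, mem_sdiff]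
      constructor
      · rintro ⟨x, hx | hx, hy⟩
        · exact Or.inl ⟨x, hx, hy⟩
        · by_cases h : ∃ x ∈ A, y ∈ F x
          · exact Or.inl h
          · refine Or.inr ⟨x, hx, hy, ?_⟩
            simpa [im, mem_biUnion] using h
      · rintro (⟨x, hx, hy⟩ | ⟨x, hx, hy, _⟩)
        · exact ⟨x, Or.inl hx, hy⟩
        · exact ⟨x, Or.inr hx, hy⟩
    have h2 : Disjoint (im F A) (im (cmap F A) B) := by
      rw [Finset.disjoint_right]
      intro y hy
      simp only [im, cmap, mem_biUnion, mem_sdiff] at hy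
      obtain ⟨x, _, _, h⟩ := hy
      simpa [im, mem_biUnion] using h
    rw [h1, Finset.card_union_of_disjoint h2]
  set P : ℕ → Finset α := fun n => (Finset.univ.filter (fun j : Fin m => j.val < n)).biUnion W
    with hP
  have hpre : ∀ i : Fin m, pre W i = P i.val := fun i => rfl
  have hstep : ∀ n (hn : n < m), P (n + 1) = P n ∪ W ⟨n, hn⟩ := by
    intro n hn
    ext x
    simp only [hP, mem_biUnion, mem_filter, mem_univ, true_and, mem_union]
    constructor
    · rintro ⟨j, hj, hx⟩
      rcases Nat.lt_succ_iff_lt_or_eq.mp hj with h | h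
      · exact Or.inl ⟨j, h, hx⟩
      · refine Or.inr ?_
        have : j = ⟨n, hn⟩ := Fin.ext h
        rwa [this] at hx
    · rintro (⟨j, hj, hx⟩ | hx)
      · exact ⟨j, Nat.lt_succ_of_lt hj, hx⟩
      · exact ⟨⟨n, hn⟩, Nat.lt_succ_self n, hx⟩
  have hdisj : ∀ n (hn : n < m), Disjoint (P n) (W ⟨n, hn⟩) := by
    intro n hn
    rw [Finset.disjoint_left]
    intro x hx hx'
    simp only [hP, mem_biUnion, mem_filter, mem_univ, true_and] at hx
    obtain ⟨j, hj, hxj⟩ := hx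
    have hne : j ≠ ⟨n, hn⟩ := by
      intro h; rw [h] at hj; exact absurd hj (lt_irrefl n)
    exact (Finset.disjoint_left.mp (hHP.1 j ⟨n, hn⟩ hne)) hxj hx'
  have hcard : ∀ n, n ≤ m - 1 → (im F (P n)).card = (P n).card := by
    intro n
    induction n with
    | zero =>
      intro _
      have : P 0 = ∅ := by
        simp [hP]
      simp [this, im]
    | succ n ih =>
      intro hn1
      have hnm1 : n < m - 1 := by omega
      have hn : n < m := by omega
      have hcrit := hHP.2.2.2.2 ⟨n, hn⟩ hnm1
      rw [hstep n hn, him, Finset.card_union_of_disjoint (hdisj n hn),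
        ih (by omega)]
      have : (im (cmap F (P n)) (W ⟨n, hn⟩)).card = (W ⟨n, hn⟩).card := by
        have := hcrit.2
        rwa [hpre ⟨n, hn⟩] at this
      rw [this]
  intro i hi
  constructor
  · have hm : 0 < m := i.pos
    obtain ⟨x, hx⟩ := (hHP.2.2.2.1 ⟨0, hm⟩).1
    refine ⟨x, ?_⟩
    rw [hpre]
    simp only [hP, mem_biUnion, mem_filter, mem_univ, true_and]
    exact ⟨⟨0, hm⟩, hi, hx⟩
  · rw [hpre]
    exact hcard i.val (by have := i.isLt; omega)
end

section
/- If (W_1, …, W_m) is a Hall partition of F, then W_m is a critical set of F_{⋃_{j=1}^{m-1}W_j} if and only if ♯F(X) = ♯X. -/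
open Finset
open scoped Classical

variable {α β : Type*}

section Aux
variable [DecidableEq α] [DecidableEq β]

lemma im_union_eq (F : α → Finset β) (A B : Finset α) :
    im F (A ∪ B) = im F A ∪ im (cmap F A) B := by
  ext y
  simp only [im, cmap, Finset.mem_biUnion, Finset.mem_union, Finset.mem_sdiff]
  constructor
  · rintro ⟨x, hx | hx, hy⟩
    · exact Or.inl ⟨x, hx, hy⟩
    · by_cases h : ∃ a ∈ A, y ∈ F a
      · exact Or.inl h
      · refine Or.inr ⟨x, hx, hy, ?_⟩
        simpa [im, Finset.mem_biUnion] using h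
  · rintro (⟨x, hx, hy⟩ | ⟨x, hx, hy, _⟩)
    · exact ⟨x, Or.inl hx, hy⟩
    · exact ⟨x, Or.inr hx, hy⟩

lemma disj_im_cmap (F : α → Finset β) (A B : Finset α) :
    Disjoint (im F A) (im (cmap F A) B) := by
  rw [Finset.disjoint_left]
  intro y hy hy'
  simp only [im, cmap, Finset.mem_biUnion, Finset.mem_sdiff] at hy'
  obtain ⟨x, -, -, h⟩ := hy'
  exact h (by simpa [im, Finset.mem_biUnion] using hy)

lemma card_im_union (F : α → Finset β) (A B : Finset α) :
    (im F (A ∪ B)).card = (im F A).card + (im (cmap F A) B).card := by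
  rw [im_union_eq, Finset.card_union_of_disjoint (disj_im_cmap F A B)]

/-- `preN W k = ⋃_{j<k} W j` with natural index. -/
def preN {m : ℕ} (W : Fin m → Finset α) (k : ℕ) : Finset α :=
  (Finset.univ.filter (fun j : Fin m => j.val < k)).biUnion W

lemma pre_eq_preN {m : ℕ} (W : Fin m → Finset α) (i : Fin m) :
    pre W i = preN W i.val := rfl

lemma preN_zero {m : ℕ} (W : Fin m → Finset α) : preN W 0 = ∅ := by
  simp [preN]

lemma preN_succ {m : ℕ} (W : Fin m → Finset α) (k : ℕ) (hk : k < m) :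
    preN W (k + 1) = preN W k ∪ W ⟨k, hk⟩ := by
  ext x
  simp only [preN, Finset.mem_biUnion, Finset.mem_filter, Finset.mem_univ, true_and,
    Finset.mem_union]
  constructor
  · rintro ⟨j, hj, hx⟩
    rcases Nat.lt_or_ge j.val k with h | h
    · exact Or.inl ⟨j, h, hx⟩
    · have : j = ⟨k, hk⟩ := Fin.ext (Nat.le_antisymm (Nat.lt_succ_iff.mp hj) h)
      exact Or.inr (this ▸ hx)
  · rintro (⟨j, hj, hx⟩ | hx)
    · exact ⟨j, Nat.lt_succ_of_lt hj, hx⟩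
    · exact ⟨⟨k, hk⟩, Nat.lt_succ_self k, hx⟩

lemma disj_preN {m : ℕ} (W : Fin m → Finset α)
    (hd : ∀ i j, i ≠ j → Disjoint (W i) (W j)) (k : ℕ) (hk : k < m) :
    Disjoint (preN W k) (W ⟨k, hk⟩) := by
  rw [Finset.disjoint_left]
  intro x hx hx'
  simp only [preN, Finset.mem_biUnion, Finset.mem_filter, Finset.mem_univ, true_and] at hx
  obtain ⟨j, hj, hxj⟩ := hx
  have hne : j ≠ ⟨k, hk⟩ := by
    intro h; subst h; exact Nat.lt_irrefl _ hj
  exact Finset.disjoint_left.mp (hd j ⟨k, hk⟩ hne) hxj hx'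

end Aux

theorem stmt6 [Fintype α] [Nonempty α] [DecidableEq α] [Fintype β] [Nonempty β] [DecidableEq β]
    (F : α → Finset β) {m : ℕ} (W : Fin m → Finset α) (hHP : IsHallPartition F W)
    (hm : 0 < m) :
    Critical (cmap F (pre W ⟨m - 1, Nat.sub_lt hm one_pos⟩)) (W ⟨m - 1, Nat.sub_lt hm one_pos⟩) ↔
      (im F Finset.univ).card = Fintype.card α := by
  obtain ⟨hd, hcov, -, hNR, hcrit⟩ := hHP
  have hlast : m - 1 < m := Nat.sub_lt hm one_pos
  -- key induction
  have key : ∀ k, k ≤ m - 1 → (im F (preN W k)).card = (preN W k).card := by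
    intro k
    induction k with
    | zero => intro _; simp [preN_zero, im]
    | succ k ih =>
      intro hk
      have hkm1 : k < m - 1 := hk
      have hkm : k < m := lt_of_lt_of_le hkm1 (Nat.sub_le m 1)
      have hcr := hcrit ⟨k, hkm⟩ hkm1
      rw [preN_succ W k hkm, card_im_union,
        Finset.card_union_of_disjoint (disj_preN W hd k hkm),
        ih (le_of_lt hkm1)]
      congr 1
      exact hcr.2
  have hbase := key (m - 1) le_rfl
  -- univ decomposition
  have hm1 : m - 1 + 1 = m := Nat.succ_pred_eq_of_pos hm
  have huniv : (Finset.univ : Finset α) = preN W (m - 1) ∪ W ⟨m - 1, hlast⟩ := by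
    rw [← preN_succ W (m - 1) hlast, ← hcov]
    congr 1
    ext j
    have hj := j.isLt
    simp only [Finset.mem_filter, Finset.mem_univ, true_and, iff_true]
    exact iff_of_true trivial (by omega)
  have hcards : Fintype.card α
      = (preN W (m - 1)).card + (W ⟨m - 1, hlast⟩).card := by
    rw [← Finset.card_univ, huniv,
      Finset.card_union_of_disjoint (disj_preN W hd (m - 1) hlast)]
  have hims : (im F Finset.univ).card
      = (preN W (m - 1)).card
        + (im (cmap F (preN W (m - 1))) (W ⟨m - 1, hlast⟩)).card := by
    rw [huniv, card_im_union, hbase]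
  have hpre : pre W ⟨m - 1, hlast⟩ = preN W (m - 1) := rfl
  have hne : (W ⟨m - 1, hlast⟩).Nonempty := (hNR ⟨m - 1, hlast⟩).1
  constructor
  · rintro ⟨-, hc⟩
    rw [hims, hcards, hpre] at *
    omega
  · intro h
    refine ⟨hne, ?_⟩
    rw [hims, hcards] at h
    rw [hpre]
    omega
end

section
/- If F satisfies the Hall condition, then F admits a Hall partition. -/
open Finset
open scoped Classical

variable {α β : Type*}

section Aux
variable [DecidableEq α] [DecidableEq β]

lemma im_union (F : α → Finset β) (P W : Finset α) : im F (P ∪ W) = im F P ∪ im F W := by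
  ext y
  simp only [im, mem_biUnion, mem_union]
  constructor
  · rintro ⟨a, ha | ha, hy⟩
    · exact Or.inl ⟨a, ha, hy⟩
    · exact Or.inr ⟨a, ha, hy⟩
  · rintro (⟨a, ha, hy⟩ | ⟨a, ha, hy⟩)
    · exact ⟨a, Or.inl ha, hy⟩
    · exact ⟨a, Or.inr ha, hy⟩

lemma im_cmap (F : α → Finset β) (P W : Finset α) : im (cmap F P) W = im F W \ im F P := by
  ext y
  simp only [im, cmap, mem_biUnion, mem_sdiff]
  constructor
  · rintro ⟨a, ha, hy, hn⟩
    exact ⟨⟨a, ha, hy⟩, hn⟩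
  · rintro ⟨⟨a, ha, hy⟩, hn⟩
    exact ⟨a, ha, hy, hn⟩

lemma cmap_union (F : α → Finset β) (P W : Finset α) (x : α) :
    cmap F (P ∪ W) x = cmap F P x \ im (cmap F P) W := by
  simp only [cmap, im_union, im_cmap]
  ext y
  simp only [mem_sdiff, mem_union]
  tauto

lemma hall_step (G : α → Finset β) (D W : Finset α) (hH : HallOn G D) (hWD : W ⊆ D)
    (hc : Critical G W) : HallOn (fun x => G x \ im G W) (D \ W) := by
  intro V hV
  rw [subset_sdiff] at hV
  obtain ⟨hVD, hdisj⟩ := hV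
  have him : im (fun x => G x \ im G W) V = im G V \ im G W := by
    ext y; simp only [im, mem_biUnion, mem_sdiff]; tauto
  rw [him]
  have h1 : (im G V \ im G W).card + (im G W).card = (im G V ∪ im G W).card :=
    card_sdiff_add_card _ _
  have h2 : im G V ∪ im G W = im G (V ∪ W) := (im_union G V W).symm
  rw [h2] at h1
  have h3 : (V ∪ W).card = V.card + W.card := card_union_of_disjoint hdisj
  have h4 : (V ∪ W).card ≤ (im G (V ∪ W)).card := hH _ (union_subset hVD hWD)
  have h5 := hc.2
  omega

/-- Partition certificate: `L` is a hall-partition of `D` relative to accumulated prefix `P`. -/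
def Good (F : α → Finset β) : Finset α → Finset α → List (Finset α) → Prop
  | _, D, [] => D = ∅
  | P, D, (W :: L) => W ⊆ D ∧ W.Nonempty ∧ (∀ x ∈ W, (cmap F P x).Nonempty) ∧
      NonReducible (cmap F P) W ∧ (L ≠ [] → Critical (cmap F P) W) ∧ Good F (P ∪ W) (D \ W) L

lemma exists_good (F : α → Finset β) :
    ∀ n (D P : Finset α), D.card ≤ n → HallOn (cmap F P) D → ∃ L, Good F P D L := by
  intro n
  induction n with
  | zero =>
    intro D P hD _
    exact ⟨[], card_eq_zero.mp (Nat.le_antisymm hD (Nat.zero_le _))⟩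
  | succ n ih =>
    intro D P hD hH
    by_cases hDe : D = ∅
    · exact ⟨[], hDe⟩
    have hDne : D.Nonempty := nonempty_iff_ne_empty.mpr hDe
    set G := cmap F P with hG
    have hne : ∀ x ∈ D, (G x).Nonempty := by
      intro x hx
      have h1 := hH {x} (by simpa using hx)
      have him : im G {x} = G x := by simp [im]
      rw [him, card_singleton] at h1
      exact card_pos.mp (by omega)
    by_cases hcrit : ∃ V, V ⊆ D ∧ Critical G V
    · obtain ⟨V0, hV0D, hV0c⟩ := hcrit
      set T := D.powerset.filter (fun V => Critical G V) with hT
      have hTne : T.Nonempty := ⟨V0, by simp [hT, mem_powerset, hV0D, hV0c]⟩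
      obtain ⟨W, hWT, hmin⟩ := T.exists_min_image Finset.card hTne
      rw [hT, mem_filter, mem_powerset] at hWT
      obtain ⟨hWD, hWc⟩ := hWT
      have hnr : NonReducible G W := by
        refine ⟨hWc.1, fun V hV hcV => ?_⟩
        have hVT : V ∈ T := by
          rw [hT, mem_filter, mem_powerset]
          exact ⟨hV.subset.trans hWD, hcV⟩
        have := hmin V hVT
        have := card_lt_card hV
        omega
      have hH' : HallOn (cmap F (P ∪ W)) (D \ W) := by
        have hfun : cmap F (P ∪ W) = fun x => G x \ im G W := funext (cmap_union F P W)
        rw [hfun]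
        exact hall_step G D W hH hWD hWc
      have hcard : (D \ W).card ≤ n := by
        have h1 : (D \ W).card = D.card - W.card := card_sdiff_of_subset hWD
        have h2 : 1 ≤ W.card := card_pos.mpr hWc.1
        omega
      obtain ⟨L, hL⟩ := ih (D \ W) (P ∪ W) hcard hH'
      exact ⟨W :: L, hWD, hWc.1, fun x hx => hne x (hWD hx), hnr, fun _ => hWc, hL⟩
    · push_neg at hcrit
      refine ⟨[D], subset_rfl, hDne, hne, ⟨hDne, fun V hV => hcrit V hV.subset⟩,
        fun h => absurd rfl h, ?_⟩
      show (D \ D) = ∅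
      simp

lemma good_subset (F : α → Finset β) :
    ∀ L P D, Good F P D L → ∀ s ∈ L, s ⊆ D := by
  intro L
  induction L with
  | nil => intro P D _ s hs; simp at hs
  | cons W L ih =>
    intro P D hG s hs
    rcases List.mem_cons.mp hs with h | h
    · exact h ▸ hG.1
    · exact (ih _ _ hG.2.2.2.2.2 s h).trans sdiff_subset

lemma good_pairwise (F : α → Finset β) :
    ∀ L P D, Good F P D L → L.Pairwise Disjoint := by
  intro L
  induction L with
  | nil => intro _ _ _; exact List.Pairwise.nil
  | cons W L ih =>
    intro P D hG
    refine List.Pairwise.cons (fun s hs => ?_) (ih _ _ hG.2.2.2.2.2)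
    have hsub : s ⊆ D \ W := good_subset F L _ _ hG.2.2.2.2.2 s hs
    exact disjoint_left.mpr fun {a} haW has => (mem_sdiff.mp (hsub has)).2 haW

lemma mem_foldr_union (x : β') [DecidableEq β'] :
    ∀ (L : List (Finset β')), x ∈ L.foldr (· ∪ ·) ∅ ↔ ∃ s ∈ L, x ∈ s := by
  intro L
  induction L with
  | nil => simp
  | cons W L ih => simp [ih]

lemma good_union (F : α → Finset β) :
    ∀ L P D, Good F P D L → L.foldr (· ∪ ·) ∅ = D := by
  intro L
  induction L with
  | nil => intro P D hG; exact hG.symm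
  | cons W L ih =>
    intro P D hG
    have h := ih _ _ hG.2.2.2.2.2
    show W ∪ L.foldr (· ∪ ·) ∅ = D
    rw [h, union_sdiff_of_subset hG.1]

lemma good_spec (F : α → Finset β) :
    ∀ L P D, Good F P D L → ∀ i (h : i < L.length),
      (∀ x ∈ L[i], (cmap F (P ∪ (L.take i).foldr (· ∪ ·) ∅) x).Nonempty) ∧
      NonReducible (cmap F (P ∪ (L.take i).foldr (· ∪ ·) ∅)) L[i] ∧
      (i < L.length - 1 → Critical (cmap F (P ∪ (L.take i).foldr (· ∪ ·) ∅)) L[i]) := by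
  intro L
  induction L with
  | nil => intro P D _ i h; simp at h
  | cons W L ih =>
    intro P D hG i h
    match i with
    | 0 =>
      simp only [List.take_zero, List.foldr_nil, union_empty, List.getElem_cons_zero,
        List.length_cons]
      refine ⟨hG.2.2.1, hG.2.2.2.1, fun hi => hG.2.2.2.2.1 ?_⟩
      intro hnil
      rw [hnil] at hi
      simp at hi
    | j + 1 =>
      have hj : j < L.length := by simpa using h
      have := ih (P ∪ W) (D \ W) hG.2.2.2.2.2 j hj
      have hset : P ∪ (((W :: L).take (j+1)).foldr (· ∪ ·) ∅)
          = (P ∪ W) ∪ (L.take j).foldr (· ∪ ·) ∅ := by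
        simp [List.take_succ_cons, union_assoc]
      simp only [List.getElem_cons_succ, hset, List.length_cons]
      refine ⟨this.1, this.2.1, fun hi => this.2.2 ?_⟩
      omega

end Aux

theorem stmt7 [Fintype α] [Nonempty α] [DecidableEq α] [Fintype β] [Nonempty β] [DecidableEq β]
    (F : α → Finset β) (hH : HallOn F Finset.univ) :
    ∃ (m : ℕ) (W : Fin m → Finset α), IsHallPartition F W := by
  have hH0 : HallOn (cmap F ∅) Finset.univ := by
    have : cmap F ∅ = F := by
      funext x; simp [cmap, im]
    rwa [this]
  obtain ⟨L, hL⟩ := exists_good F (Finset.univ.card) Finset.univ ∅ le_rfl hH0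
  refine ⟨L.length, fun i => L[i.val], ?_, ?_, ?_, ?_, ?_⟩
  · -- disjointness
    intro i j hij
    have hp := good_pairwise F L ∅ Finset.univ hL
    rw [List.pairwise_iff_getElem] at hp
    rcases Nat.lt_or_ge i.val j.val with h | h
    · exact hp i.val j.val i.isLt j.isLt h
    · have h' : j.val < i.val := by
        rcases Nat.lt_or_ge j.val i.val with h' | h'
        · exact h'
        · exact absurd (Fin.ext (Nat.le_antisymm h' h)) hij
      exact (hp j.val i.val j.isLt i.isLt h').symm
  · -- covering
    apply Finset.eq_univ_of_forall
    intro x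
    rw [mem_biUnion]
    have hx : x ∈ L.foldr (· ∪ ·) ∅ := by
      rw [good_union F L ∅ Finset.univ hL]; exact mem_univ x
    rw [mem_foldr_union] at hx
    obtain ⟨s, hs, hxs⟩ := hx
    obtain ⟨k, hk, hks⟩ := List.mem_iff_getElem.mp hs
    exact ⟨⟨k, hk⟩, mem_univ _, hks ▸ hxs⟩
  all_goals
    have hpre : ∀ i : Fin L.length,
        pre (fun i : Fin L.length => L[i.val]) i = ∅ ∪ (L.take i.val).foldr (· ∪ ·) ∅ := by
      intro i
      ext y
      rw [empty_union, pre, mem_biUnion, mem_foldr_union]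
      constructor
      · rintro ⟨j, hj, hy⟩
        rw [mem_filter] at hj
        refine ⟨L[j.val], ?_, hy⟩
        exact List.mem_take_iff_getElem.mpr ⟨j.val, lt_min hj.2 j.isLt, rfl⟩
      · rintro ⟨s, hs, hy⟩
        obtain ⟨k, hk, hks⟩ := List.mem_take_iff_getElem.mp hs
        rw [Nat.lt_min] at hk
        exact ⟨⟨k, hk.2⟩, mem_filter.mpr ⟨mem_univ _, hk.1⟩, hks ▸ hy⟩
  · intro i x hx
    rw [hpre i]
    exact (good_spec F L ∅ Finset.univ hL i.val i.isLt).1 x hx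
  · intro i
    rw [hpre i]
    exact (good_spec F L ∅ Finset.univ hL i.val i.isLt).2.1
  · intro i hi
    rw [hpre i]
    exact (good_spec F L ∅ Finset.univ hL i.val i.isLt).2.2 hi
end

section
/- If F admits a Hall partition, then F satisfies the Hall condition. -/
open Finset
open scoped Classical

variable {α β : Type*}

section Aux
variable [DecidableEq α] [DecidableEq β]

lemma im_mono (F : α → Finset β) {U V : Finset α} (h : U ⊆ V) : im F U ⊆ im F V :=
  Finset.biUnion_subset_biUnion_of_subset_left _ h

lemma hall_of_nonred {F : α → Finset β} {D : Finset α}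
    (hne : ∀ x ∈ D, (F x).Nonempty) (hnr : NonReducible F D) :
    HallOn F D := by
  intro V
  induction V using Finset.strongInduction with
  | _ V ih =>
    intro hV
    by_contra hlt
    push_neg at hlt
    have hVne : V.Nonempty := by
      rcases V.eq_empty_or_nonempty with rfl | h
      · simp [im] at hlt
      · exact h
    obtain ⟨x, hx⟩ := hVne
    have hsub : V.erase x ⊂ V := Finset.erase_ssubset hx
    have h1 : (V.erase x).card ≤ (im F (V.erase x)).card :=
      ih _ hsub (hsub.subset.trans hV)
    have h2 : (im F (V.erase x)).card ≤ (im F V).card :=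
      Finset.card_le_card (im_mono F hsub.subset)
    have hcard : (V.erase x).card = V.card - 1 := Finset.card_erase_of_mem hx
    have hVpos : 1 ≤ V.card := Finset.card_pos.2 ⟨x, hx⟩
    rcases (V.erase x).eq_empty_or_nonempty with hemp | hne'
    · have hV1 : V = {x} := by
        apply Finset.eq_singleton_iff_unique_mem.2
        refine ⟨hx, fun y hy => ?_⟩
        by_contra hne2
        exact (Finset.notMem_empty y) (hemp ▸ Finset.mem_erase.2 ⟨hne2, hy⟩)
      obtain ⟨b, hb⟩ := hne x (hV hx)
      have : b ∈ im F V := Finset.mem_biUnion.2 ⟨x, hx, hb⟩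
      have : 1 ≤ (im F V).card := Finset.card_pos.2 ⟨b, this⟩
      have hz : (V.erase x).card = 0 := by simp [hemp]
      omega
    · have h3 : (im F V).card ≤ (V.erase x).card := by omega
      have heq := le_antisymm (h2.trans h3) h1
      exact hnr.2 _ (lt_of_lt_of_le hsub hV) ⟨hne', heq⟩

end Aux

theorem stmt8 [Fintype α] [Nonempty α] [DecidableEq α] [Fintype β] [Nonempty β] [DecidableEq β]
    (F : α → Finset β) {m : ℕ} (W : Fin m → Finset α) (hHP : IsHallPartition F W) :
    HallOn F Finset.univ := by
  obtain ⟨hdisj, hcover, hnonemp, hnonred, _⟩ := hHP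
  intro S _
  set G : Fin m → α → Finset β := fun i => cmap F (pre W i) with hG
  set T : Fin m → Finset α := fun i => S ∩ W i with hT
  -- each part satisfies Hall for its complement map
  have hallG : ∀ i, (T i).card ≤ (im (G i) (T i)).card := fun i =>
    hall_of_nonred (hnonemp i) (hnonred i) (T i) (Finset.inter_subset_right)
  -- S is the disjoint union of the T i
  have hSeq : S = Finset.univ.biUnion T := by
    ext x
    simp only [Finset.mem_biUnion, Finset.mem_univ, true_and, hT, Finset.mem_inter]
    constructor
    · intro hxS
      have : x ∈ Finset.univ.biUnion W := hcover ▸ Finset.mem_univ x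
      obtain ⟨i, _, hi⟩ := Finset.mem_biUnion.1 this
      exact ⟨i, hxS, hi⟩
    · rintro ⟨i, h, _⟩; exact h
  have hTdisj : ∀ i ∈ (Finset.univ : Finset (Fin m)), ∀ j ∈ (Finset.univ : Finset (Fin m)),
      i ≠ j → Disjoint (T i) (T j) := fun i _ j _ hij =>
    Finset.disjoint_of_subset_left Finset.inter_subset_right
      (Finset.disjoint_of_subset_right Finset.inter_subset_right (hdisj i j hij))
  have hScard : S.card = ∑ i, (T i).card := by
    rw [hSeq]; exact Finset.card_biUnion hTdisj
  -- images under G i are pairwise disjoint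
  have himsub : ∀ i, im (G i) (T i) ⊆ im F (W i) := by
    intro i b hb
    obtain ⟨x, hx, hbx⟩ := Finset.mem_biUnion.1 hb
    exact Finset.mem_biUnion.2 ⟨x, (Finset.mem_inter.1 hx).2, (Finset.mem_sdiff.1 hbx).1⟩
  have himdisj0 : ∀ i j : Fin m, j.val < i.val →
      Disjoint (im (G j) (T j)) (im (G i) (T i)) := by
    intro i j hji
    have h1 : im (G j) (T j) ⊆ im F (pre W i) := by
      refine (himsub j).trans ?_
      intro b hb
      obtain ⟨x, hx, hbx⟩ := Finset.mem_biUnion.1 hb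
      refine Finset.mem_biUnion.2 ⟨x, ?_, hbx⟩
      exact Finset.mem_biUnion.2 ⟨j, Finset.mem_filter.2 ⟨Finset.mem_univ j, hji⟩, hx⟩
    have h2 : Disjoint (im (G i) (T i)) (im F (pre W i)) := by
      rw [Finset.disjoint_left]
      intro b hb
      obtain ⟨x, _, hbx⟩ := Finset.mem_biUnion.1 hb
      exact (Finset.mem_sdiff.1 hbx).2
    exact Finset.disjoint_of_subset_left h1 h2.symm
  have himdisj : ∀ i ∈ (Finset.univ : Finset (Fin m)), ∀ j ∈ (Finset.univ : Finset (Fin m)),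
      i ≠ j → Disjoint (im (G i) (T i)) (im (G j) (T j)) := by
    intro i _ j _ hij
    rcases lt_or_gt_of_ne (fun h : i.val = j.val => hij (Fin.ext h)) with h | h
    · exact (himdisj0 j i h)
    · exact (himdisj0 i j h).symm
  have hUsub : Finset.univ.biUnion (fun i => im (G i) (T i)) ⊆ im F S := by
    intro b hb
    obtain ⟨i, _, hbi⟩ := Finset.mem_biUnion.1 hb
    obtain ⟨x, hx, hbx⟩ := Finset.mem_biUnion.1 hbi
    exact Finset.mem_biUnion.2 ⟨x, (Finset.mem_inter.1 hx).1, (Finset.mem_sdiff.1 hbx).1⟩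
  calc S.card = ∑ i, (T i).card := hScard
    _ ≤ ∑ i, (im (G i) (T i)).card := Finset.sum_le_sum (fun i _ => hallG i)
    _ = (Finset.univ.biUnion (fun i => im (G i) (T i))).card :=
        (Finset.card_biUnion himdisj).symm
    _ ≤ (im F S).card := Finset.card_le_card hUsub
end

section
/- If (W_1,…,W_m) is a Hall partition of F and s is an alldifferent selection of F, then for each i = 1,…,m, the restriction of s to ⋃_{j=i}^m W_j is an alldifferent selection of the complement mapping F_{⋃_{j=1}^{i-1}W_j}. -/
open Finset
open scoped Classical

variable {α β : Type*}

lemma card_im_pre_le [Fintype α] [DecidableEq α] [DecidableEq β]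
    (F : α → Finset β) {m : ℕ} (W : Fin m → Finset α) (hHP : IsHallPartition F W) :
    ∀ n, n ≤ m - 1 →
      (im F ((Finset.univ.filter (fun j : Fin m => j.val < n)).biUnion W)).card ≤
      ((Finset.univ.filter (fun j : Fin m => j.val < n)).biUnion W).card := by
  intro n
  induction n with
  | zero =>
      intro _
      simp [im]
  | succ n ih =>
      intro hle
      have hn : n < m := by omega
      have hnm1 : n < m - 1 := by omega
      have hcrit := hHP.2.2.2.2 ⟨n, hn⟩ hnm1
      set P : Finset α := (Finset.univ.filter (fun j : Fin m => j.val < n)).biUnion W with hP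
      set P' : Finset α := (Finset.univ.filter (fun j : Fin m => j.val < n + 1)).biUnion W
        with hP'
      have hpre : pre W ⟨n, hn⟩ = P := rfl
      -- P' = P ∪ W ⟨n⟩
      have hP'eq : P' = P ∪ W ⟨n, hn⟩ := by
        ext x
        simp only [hP, hP', mem_biUnion, mem_filter, mem_univ, true_and, mem_union]
        constructor
        · rintro ⟨j, hj, hx⟩
          rcases Nat.lt_or_ge j.val n with h | h
          · exact Or.inl ⟨j, h, hx⟩
          · have : j = ⟨n, hn⟩ := Fin.ext (by simp only [Fin.val_mk]; omega)
            exact Or.inr (this ▸ hx)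
        · rintro (⟨j, hj, hx⟩ | hx)
          · exact ⟨j, by omega, hx⟩
          · exact ⟨⟨n, hn⟩, by simp only [Fin.val_mk]; omega, hx⟩
      have hdisj : Disjoint P (W ⟨n, hn⟩) := by
        rw [hP]
        apply Finset.disjoint_biUnion_left _ _ _ |>.mpr
        intro j hj
        simp only [mem_filter, mem_univ, true_and] at hj
        exact hHP.1 j ⟨n, hn⟩ (by intro h; subst h; simp only [Fin.val_mk] at hj; omega)
      have hsub : im F P' ⊆ im F P ∪ im (cmap F P) (W ⟨n, hn⟩) := by
        intro y hy
        simp only [im, mem_biUnion] at hy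
        obtain ⟨x, hx, hyx⟩ := hy
        rw [hP'eq, mem_union] at hx
        rcases hx with hx | hx
        · exact mem_union_left _ (by simp only [im, mem_biUnion]; exact ⟨x, hx, hyx⟩)
        · by_cases hyim : y ∈ im F P
          · exact mem_union_left _ hyim
          · refine mem_union_right _ ?_
            simp only [im, mem_biUnion]
            exact ⟨x, hx, by simp [cmap, hyx, hyim]⟩
      calc (im F P').card ≤ (im F P ∪ im (cmap F P) (W ⟨n, hn⟩)).card :=
            Finset.card_le_card hsub
        _ ≤ (im F P).card + (im (cmap F P) (W ⟨n, hn⟩)).card := Finset.card_union_le _ _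
        _ ≤ P.card + (W ⟨n, hn⟩).card := by
            have := hcrit.2
            rw [hpre] at this
            rw [this]
            exact Nat.add_le_add_right (ih (by omega)) _
        _ = P'.card := by rw [hP'eq, Finset.card_union_of_disjoint hdisj]

theorem stmt10 [Fintype α] [Nonempty α] [DecidableEq α] [Fintype β] [Nonempty β] [DecidableEq β]
    (F : α → Finset β) {m : ℕ} (W : Fin m → Finset α) (hHP : IsHallPartition F W)
    (s : α → β) (hsel : ∀ x, s x ∈ F x) (hinj : Function.Injective s) :
    ∀ i : Fin m, Set.InjOn s ↑(Finset.univ \ pre W i) ∧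
      ∀ x ∈ Finset.univ \ pre W i, s x ∈ cmap F (pre W i) x := by
  intro i
  refine ⟨fun x _ y _ hxy => hinj hxy, ?_⟩
  intro x hx
  set P := pre W i with hP
  -- s maps P into im F P
  have hmap : ∀ z ∈ P, s z ∈ im F P := by
    intro z hz
    simp only [im, mem_biUnion]
    exact ⟨z, hz, hsel z⟩
  have himg : P.image s ⊆ im F P := by
    intro y hy
    obtain ⟨z, hz, rfl⟩ := Finset.mem_image.mp hy
    exact hmap z hz
  have hcardle : (im F P).card ≤ P.card := by
    have := card_im_pre_le F W hHP i.val (by omega)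
    simpa [hP, pre] using this
  have hcardimg : (P.image s).card = P.card :=
    Finset.card_image_of_injective _ hinj
  have heq : P.image s = im F P :=
    Finset.eq_of_subset_of_card_le himg (by omega)
  have hxP : x ∉ P := by
    simp only [Finset.mem_sdiff] at hx
    exact hx.2
  have hnotin : s x ∉ im F P := by
    rw [← heq]
    intro hmem
    obtain ⟨z, hz, hzx⟩ := Finset.mem_image.mp hmem
    exact hxP (hinj hzx ▸ hz)
  simp [cmap, hsel x, hnotin]
end

section
/- F is alldifferent (nonempty images and F^* = F) if and only if F has nonempty images and for every x ∈ X and y ∈ F(x), the mapping F_{{x},{y}} : X∖{x} → 2^(Y∖{y}), z ↦ F(z)∖{y}, admits an injective selection. -/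
open Finset
open scoped Classical

variable {α β : Type*}

theorem stmt14 [Fintype α] [Nonempty α] [DecidableEq α] [Fintype β] [Nonempty β] [DecidableEq β] (F : α → Finset β) :
    ((∀ x, (F x).Nonempty) ∧ kernel F = F) ↔
      ((∀ x, (F x).Nonempty) ∧ ∀ x : α, ∀ y ∈ F x,
        ∃ s : α → β, Set.InjOn s ↑(Finset.univ \ ({x} : Finset α)) ∧
          ∀ z ∈ Finset.univ \ ({x} : Finset α), s z ∈ F z \ {y}) := by
  constructor
  · rintro ⟨hne, hk⟩
    refine ⟨hne, fun x y hy => ?_⟩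
    have hyk : y ∈ kernel F x := by rw [hk]; exact hy
    simp only [kernel, Finset.mem_filter] at hyk
    obtain ⟨-, s, hs, hsel, hsx⟩ := hyk
    refine ⟨s, fun a _ b _ hab => hs hab, ?_⟩
    intro z hz
    simp only [Finset.mem_sdiff, Finset.mem_univ, Finset.mem_singleton, true_and] at hz
    simp only [Finset.mem_sdiff, Finset.mem_singleton]
    exact ⟨hsel z, fun h => hz (hs (h.trans hsx.symm))⟩
  · rintro ⟨hne, h⟩
    refine ⟨hne, ?_⟩
    funext x
    apply Finset.Subset.antisymm (fun y hy => ((by simpa [kernel, Finset.mem_filter] using hy : y ∈ F x ∧ _)).1)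
    intro y hy
    obtain ⟨s, hinj, hsel⟩ := h x y hy
    have hmem : ∀ z : α, z ≠ x → z ∈ Finset.univ \ ({x} : Finset α) := by
      intro z hz; simp [hz]
    have hne' : ∀ z : α, z ≠ x → s z ∈ F z ∧ s z ≠ y := by
      intro z hz
      have := hsel z (hmem z hz)
      simpa [Finset.mem_sdiff] using this
    simp only [kernel, Finset.mem_filter]
    refine ⟨hy, fun z => if z = x then y else s z, ?_, ?_, by simp⟩
    · intro a b hab
      by_cases ha : a = x <;> by_cases hb : b = x <;>
        simp only [ha, hb, if_pos, if_neg, ite_true, ite_false] at hab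
      · exact ha.trans hb.symm
      · exact absurd hab.symm (hne' b hb).2
      · exact absurd hab (hne' a ha).2
      · have hmc : ∀ z : α, z ≠ x → (z : α) ∈ (↑(Finset.univ \ ({x} : Finset α)) : Set α) := by
          intro z hz; simpa using hmem z hz
        exact hinj (hmc a ha) (hmc b hb) hab
    · intro z
      by_cases hz : z = x
      · simpa [hz] using hy
      · simpa [hz] using (hne' z hz).1
end

section
/- If F is alldifferent (nonempty images and F^* = F), then F(W) ∩ F(X∖W) = ∅ for every critical set W ⊆ X of F. -/
open Finset
open scoped Classical

variable {α β : Type*}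

theorem stmt15 [Fintype α] [Nonempty α] [DecidableEq α] [Fintype β] [Nonempty β] [DecidableEq β]
    (F : α → Finset β) (hne : ∀ x, (F x).Nonempty) (hker : kernel F = F) :
    ∀ W : Finset α, Critical F W → Disjoint (im F W) (im F (Finset.univ \ W)) := by
  intro W hW
  rw [Finset.disjoint_left]
  intro y hyW hyX
  obtain ⟨x, hx, hyx⟩ := Finset.mem_biUnion.1 hyX
  have hxW : x ∉ W := (Finset.mem_sdiff.1 hx).2
  have hy : y ∈ kernel F x := by rw [hker]; exact hyx
  simp only [kernel, Finset.mem_filter] at hy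
  obtain ⟨-, s, hsinj, hs, hsx⟩ := hy
  have hsub : W.image s ⊆ im F W := by
    intro b hb; obtain ⟨a, ha, rfl⟩ := Finset.mem_image.1 hb
    exact Finset.mem_biUnion.2 ⟨a, ha, hs a⟩
  have hcard : (W.image s).card = W.card := Finset.card_image_of_injective _ hsinj
  have heq : W.image s = im F W :=
    Finset.eq_of_subset_of_card_le hsub (by rw [hcard, hW.2])
  have hyim : y ∈ W.image s := heq ▸ hyW
  obtain ⟨w, hw, hwy⟩ := Finset.mem_image.1 hyim
  exact hxW (hsinj (hwy.trans hsx.symm) ▸ hw)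
end

section
/- If F satisfies the Hall condition and V, W ⊆ X are critical sets of F, then ♯(V∩W) = ♯F(V∩W) = ♯(F(V)∩F(W)) and ♯(V∪W) = ♯F(V∪W) = ♯(F(V)∪F(W)); in particular V∩W (if nonempty) and V∪W are critical sets of F. -/
open Finset
open scoped Classical

variable {α β : Type*}

theorem stmt16 [Fintype α] [DecidableEq α] [Fintype β] [DecidableEq β]
    (F : α → Finset β) (hH : HallOn F Finset.univ)
    (V W : Finset α) (hV : Critical F V) (hW : Critical F W) :
    ((V ∩ W).card = (im F (V ∩ W)).card ∧ (im F (V ∩ W)).card = (im F V ∩ im F W).card) ∧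
    ((V ∪ W).card = (im F (V ∪ W)).card ∧ (im F (V ∪ W)).card = (im F V ∪ im F W).card) ∧
    ((V ∩ W).Nonempty → Critical F (V ∩ W)) ∧ Critical F (V ∪ W) := by
  have hsub : im F (V ∩ W) ⊆ im F V ∩ im F W := by
    intro y hy
    simp only [im, Finset.mem_biUnion, Finset.mem_inter] at *
    obtain ⟨x, ⟨hxV, hxW⟩, hy⟩ := hy
    exact ⟨⟨x, hxV, hy⟩, ⟨x, hxW, hy⟩⟩
  have hun : im F (V ∪ W) = im F V ∪ im F W := by
    ext y
    simp only [im, Finset.mem_biUnion, Finset.mem_union]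
    constructor
    · rintro ⟨x, hx | hx, hy⟩
      · exact Or.inl ⟨x, hx, hy⟩
      · exact Or.inr ⟨x, hx, hy⟩
    · rintro (⟨x, hx, hy⟩ | ⟨x, hx, hy⟩)
      · exact ⟨x, Or.inl hx, hy⟩
      · exact ⟨x, Or.inr hx, hy⟩
  have h1 : (V ∩ W).card ≤ (im F (V ∩ W)).card := hH _ (Finset.subset_univ _)
  have h2 : (im F (V ∩ W)).card ≤ (im F V ∩ im F W).card := Finset.card_le_card hsub
  have h3 : (V ∪ W).card ≤ (im F (V ∪ W)).card := hH _ (Finset.subset_univ _)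
  have e1 := Finset.card_union_add_card_inter (im F V) (im F W)
  have e2 := Finset.card_union_add_card_inter V W
  rw [hun] at h3
  have hv := hV.2
  have hw := hW.2
  refine ⟨⟨by omega, by omega⟩, ⟨by rw [hun]; omega, by rw [hun]⟩, ?_, ?_⟩
  · intro hne; exact ⟨hne, by omega⟩
  · exact ⟨hV.1.mono Finset.subset_union_left, by rw [hun]; omega⟩
end
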